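/- Let d ≥ 2 and let p, k be natural numbers with 1 ≤ p < k and k + p odd, and set α = (k+p−1)/2 and β = (k−p−1)/2. If x, y ∈ S and x₁ ≤ y₁, then |y₁ − p − x₁| + ∑_{i=2}^d |y_i − x_i| ≤ k; in particular x ∈ N(y,p,k). -/

import Mathlib

open Finset

/-- The L1 norm on the integer lattice `Fin d → ℤ`. -/
def norm1 {d : ℕ} (x : Fin d → ℤ) : ℤ := ∑ i, |x i|

/-- The first standard basis vector of `Fin d → ℤ`. -/
def e1 {d : ℕ} : Fin d → ℤ := fun i => if (i : ℕ) = 0 then 1 else 0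

/-- `inN p k x y` means `y` belongs to the displaced distance-`k` neighborhood `N(x, p, k)`,
i.e. `‖y − (x + p·e₁)‖₁ ≤ k` or `‖y − (x − p·e₁)‖₁ ≤ k`. -/
def inN {d : ℕ} (p k : ℕ) (x y : Fin d → ℤ) : Prop :=
  norm1 (y - (x + (p : ℤ) • e1)) ≤ (k : ℤ) ∨ norm1 (y - (x - (p : ℤ) • e1)) ≤ (k : ℤ)


/-- `∑_{i=2}^d |x_i|` : the sum of absolute values of all but the first coordinate. -/
def tailSum {d : ℕ} (x : Fin d → ℤ) : ℤ :=
  ∑ i ∈ Finset.univ.filter (fun i : Fin d => (i : ℕ) ≠ 0), |x i|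


/-- The `j`-th coordinate (0-indexed) of a lattice point, or `0` if out of range. -/
def coord {d : ℕ} (x : Fin d → ℤ) (j : ℕ) : ℤ := if h : j < d then x ⟨j, h⟩ else 0


/-- The set `S = { x : p+1 ≤ x₁ ≤ α+1, |x₂| ≤ β, and ‖x‖₁ = α+1 }`. -/
def Sset (d : ℕ) (p α β : ℤ) : Set (Fin d → ℤ) :=
  {x | p + 1 ≤ coord x 0 ∧ coord x 0 ≤ α + 1 ∧ |coord x 1| ≤ β ∧ norm1 x = α + 1}

/-! Since the first coordinate of a point of `S` is positive, its remaining coordinates have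
`ℓ¹`-norm `α + 1 - z₁`. Bounding the tail of `y - x` by the sum of the tails of `x` and `y`, and
using `x₁, y₁ ≥ p + 1` on whichever side the absolute value opens, gives the bound
`2α - p = k - 1`. -/

section Lattice

variable {d : ℕ}

lemma lt_of_coord_ne_zero {j : ℕ} {x : Fin d → ℤ} (h : coord x j ≠ 0) : j < d := by
  by_contra hj
  exact h (dif_neg hj)

lemma coord_sub (x y : Fin d → ℤ) (j : ℕ) : coord (x - y) j = coord x j - coord y j := by
  unfold coord
  split_ifs <;> simp

lemma coord_add_smul_e1_zero (hd : 0 < d) (z : Fin d → ℤ) (c : ℤ) :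
    coord (z + c • e1) 0 = coord z 0 + c := by
  simp [coord, hd, e1]

lemma norm1_eq_abs_coord_zero_add_tailSum (z : Fin d → ℤ) :
    norm1 z = |coord z 0| + tailSum z := by
  cases d with
  | zero => simp [norm1, tailSum, coord]
  | succ n =>
    have hfilter : univ.filter (fun i : Fin (n + 1) => (i : ℕ) ≠ 0) = univ.erase 0 := by
      ext i
      rw [mem_filter, mem_erase, Fin.ne_iff_vne]
      simp
    rw [norm1, tailSum, hfilter, coord, dif_pos n.succ_pos, ← add_sum_erase _ _ (mem_univ 0)]
    rfl

lemma tailSum_eq_norm1_sub_coord_zero {z : Fin d → ℤ} (h : 0 ≤ coord z 0) :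
    tailSum z = norm1 z - coord z 0 := by
  rw [norm1_eq_abs_coord_zero_add_tailSum, abs_of_nonneg h]
  ring

lemma tailSum_sub_le (x y : Fin d → ℤ) : tailSum (x - y) ≤ tailSum x + tailSum y := by
  rw [tailSum, tailSum, tailSum, ← sum_add_distrib]
  exact sum_le_sum fun i _ => abs_sub (x i) (y i)

lemma tailSum_sub_comm (x y : Fin d → ℤ) : tailSum (x - y) = tailSum (y - x) :=
  sum_congr rfl fun i _ => abs_sub_comm (x i) (y i)

lemma tailSum_add_smul_e1 (z : Fin d → ℤ) (c : ℤ) : tailSum (z + c • e1) = tailSum z := by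
  refine sum_congr rfl fun i hi => ?_
  simp [e1, (mem_filter.1 hi).2]

lemma norm1_sub_sub_smul_e1 (hd : 0 < d) (x y : Fin d → ℤ) (c : ℤ) :
    norm1 (x - (y - c • e1)) = |coord y 0 - c - coord x 0| + tailSum (y - x) := by
  have hshift : x - (y - c • e1) = (x - y) + c • e1 := by abel
  rw [hshift, norm1_eq_abs_coord_zero_add_tailSum, coord_add_smul_e1_zero hd, coord_sub,
    tailSum_add_smul_e1, tailSum_sub_comm, ← abs_neg]
  ring_nf

theorem abs_coord_zero_sub_add_tailSum_sub_le {p α β : ℤ} (hp : 0 ≤ p) {x y : Fin d → ℤ}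
    (hx : x ∈ Sset d p α β) (hy : y ∈ Sset d p α β) :
    |coord y 0 - p - coord x 0| + tailSum (y - x) ≤ 2 * α - p := by
  obtain ⟨hx₀, -, -, hx_norm⟩ := hx
  obtain ⟨hy₀, -, -, hy_norm⟩ := hy
  have hx_tail := tailSum_eq_norm1_sub_coord_zero (z := x) (by linarith)
  have hy_tail := tailSum_eq_norm1_sub_coord_zero (z := y) (by linarith)
  have h_tail_sub := tailSum_sub_le y x
  rcases abs_cases (coord y 0 - p - coord x 0) with ⟨h, -⟩ | ⟨h, -⟩ <;> linarith

end Lattice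

theorem stmt14_general (d : ℕ) (p k : ℕ)
    (α β : ℤ) (hα : 2 * α = (k : ℤ) + (p : ℤ) - 1)
    (x y : Fin d → ℤ) (hx : x ∈ Sset d (p : ℤ) α β) (hy : y ∈ Sset d (p : ℤ) α β) :
    |coord y 0 - (p : ℤ) - coord x 0| + tailSum (y - x) ≤ (k : ℤ) ∧ inN p k y x := by
  have hbound : |coord y 0 - (p : ℤ) - coord x 0| + tailSum (y - x) ≤ (k : ℤ) := by
    have h := abs_coord_zero_sub_add_tailSum_sub_le (Int.natCast_nonneg p) hx hy
    linarith
  have hd : 0 < d := lt_of_coord_ne_zero (x := x) (j := 0) (by linarith [hx.1])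
  exact ⟨hbound, Or.inr (by rwa [norm1_sub_sub_smul_e1 hd])⟩

/-- If `d ≥ 2`, `1 ≤ p < k`, `k + p` is odd, `α = (k+p−1)/2` and `β = (k−p−1)/2`, then for
`x, y ∈ S` with `x₁ ≤ y₁` we have `|y₁ − p − x₁| + ∑_{i=2}^d |y_i − x_i| ≤ k`; in particular
`x ∈ N(y, p, k)`. -/
theorem stmt14 (d : ℕ) (hd : 2 ≤ d) (p k : ℕ) (hp : 1 ≤ p) (hpk : p < k)
    (hodd : Odd (k + p))
    (α β : ℤ) (hα : 2 * α = (k : ℤ) + (p : ℤ) - 1) (hβ : 2 * β = (k : ℤ) - (p : ℤ) - 1)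
    (x y : Fin d → ℤ) (hx : x ∈ Sset d (p : ℤ) α β) (hy : y ∈ Sset d (p : ℤ) α β)
    (hxy : coord x 0 ≤ coord y 0) :
    |coord y 0 - (p : ℤ) - coord x 0| + tailSum (y - x) ≤ (k : ℤ) ∧ inN p k y x :=
  stmt14_general d p k α β hα x y hx hy
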